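/- arXiv:2311.00075 — 5 statements merged into one kernel-verified Lean document; each statement's English description precedes it below -/
import Mathlib

section
/- Let d ≥ 2 and n ≥ d+1 with (n − d) dividing n, and set r = n/(n − d). For every graph G on n vertices with maximum degree at most d, the number of nonempty connected vertex subsets satisfies N(G) ≤ 2^n − r·2^{n−d} + n + r − 1. -/
open SimpleGraph

/-- The number of (nonempty) vertex subsets of `G` inducing a connected subgraph. -/
noncomputable def numConnSets {V : Type*} (G : SimpleGraph V) : ℕ :=
  Nat.card {s : Finset V // (G.induce (s : Set V)).Connected}

/-!
Every vertex `v` has at least `n - d - 1` non-neighbours, so for `k ≥ 1` at least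
`C(n - d - 1, k - 1)` of the `k`-sets containing `v` have `v` as an isolated vertex. Counting the
pairs (isolated vertex, set) twice shows that at least `n C(n - d - 1, k - 1) / k ≥ r C(n - d, k)`
of the `k`-sets have an isolated vertex, and for `k ≥ 2` these induce disconnected subgraphs.
Summing over `2 ≤ k ≤ n - d` and adding the empty set gives at least
`r (2^(n-d) - (n - d) - 1) + 1` subsets that are not connected.
-/

open Finset

theorem Nat.sum_Icc_two_choose (m : ℕ) : ∑ k ∈ Icc 2 m, m.choose k = 2 ^ m - (m + 1) := by
  rcases Nat.eq_zero_or_pos m with rfl | hm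
  · simp
  have hsplit := sum_range_add_sum_Ico (fun k => m.choose k) (show 2 ≤ m + 1 by omega)
  rw [Ico_add_one_right_eq_Icc, sum_range_choose] at hsplit
  simp only [sum_range_succ, sum_range_zero, Nat.choose_zero_right, Nat.choose_one_right] at hsplit
  omega

theorem Nat.mul_choose_eq_mul_choose_sub_one (m : ℕ) {k : ℕ} (hk : 1 ≤ k) :
    k * m.choose k = m * (m - 1).choose (k - 1) := by
  obtain ⟨k, rfl⟩ := Nat.exists_eq_add_of_le' hk
  rcases m with _ | m
  · simp
  · simpa [mul_comm] using (Nat.add_one_mul_choose_eq m k).symm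

namespace SimpleGraph

variable {V : Type*} {G : SimpleGraph V}

theorem not_connected_induce_of_forall_not_adj {s : Set V} {v w : V} (hv : v ∈ s) (hw : w ∈ s)
    (hwv : w ≠ v) (hiso : ∀ u ∈ s, ¬G.Adj v u) : ¬(G.induce s).Connected := by
  intro hconn
  obtain ⟨p⟩ := hconn.preconnected ⟨v, hv⟩ ⟨w, hw⟩
  cases p with
  | nil => exact hwv rfl
  | cons hadj _ => exact hiso _ (Subtype.prop _) (by simpa using hadj)

variable [Fintype V] [DecidableRel G.Adj]

section

variable [DecidableEq V]

theorem choose_degree_compl_le_card_isolating (v : V) {k : ℕ} (hk : 1 ≤ k) :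
    (Gᶜ.degree v).choose (k - 1) ≤
      #{s : Finset V | #s = k ∧ v ∈ s ∧ ∀ w ∈ s, ¬G.Adj v w} := by
  rw [← card_neighborFinset_eq_degree, ← card_powersetCard]
  refine card_le_card_of_injOn (insert v) (fun t ht => ?_) ?_
  · obtain ⟨htN, htk⟩ := mem_powersetCard.mp ht
    have hvt : v ∉ t := fun h => by simpa using htN h
    rw [mem_coe, mem_filter, card_insert_of_notMem hvt, htk]
    refine ⟨mem_univ _, by omega, mem_insert_self v t, fun w hw => ?_⟩
    rcases mem_insert.mp hw with rfl | hw
    · exact G.irrefl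
    · exact ((compl_adj G v w).mp (by simpa using htN hw)).2
  · intro t ht t' ht' heq
    have hvt : v ∉ t := fun h => by simpa using (mem_powersetCard.mp ht).1 h
    have hvt' : v ∉ t' := fun h => by simpa using (mem_powersetCard.mp ht').1 h
    simpa [erase_insert hvt, erase_insert hvt'] using congrArg (·.erase v) heq

theorem sum_choose_degree_compl_le_mul_card_hasIsolated {k : ℕ} (hk : 1 ≤ k) :
    ∑ v, (Gᶜ.degree v).choose (k - 1) ≤
      k * #{s : Finset V | #s = k ∧ ∃ v ∈ s, ∀ w ∈ s, ¬G.Adj v w} := by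
  set B : Finset (Finset V) := {s | #s = k ∧ ∃ v ∈ s, ∀ w ∈ s, ¬G.Adj v w}
  let isolates (v : V) (s : Finset V) : Prop := v ∈ s ∧ ∀ w ∈ s, ¬G.Adj v w
  calc ∑ v, (Gᶜ.degree v).choose (k - 1)
      ≤ ∑ v, #(B.bipartiteAbove isolates v) := by
        refine sum_le_sum fun v _ => (choose_degree_compl_le_card_isolating v hk).trans
          (card_le_card fun s hs => ?_)
        obtain ⟨hsk, hvs, hiso⟩ := (mem_filter.mp hs).2
        simpa [B, isolates] using ⟨⟨hsk, v, hvs, hiso⟩, hvs, hiso⟩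
    _ = ∑ s ∈ B, #(univ.bipartiteBelow isolates s) :=
        sum_card_bipartiteAbove_eq_sum_card_bipartiteBelow _
    _ ≤ ∑ s ∈ B, k := sum_le_sum fun s hs =>
        (card_le_card fun v hv => ((mem_bipartiteBelow _).mp hv).2.1).trans
          (mem_filter.mp hs).2.1.le
    _ = k * #B := by rw [sum_const, smul_eq_mul, mul_comm]

theorem mul_choose_le_card_hasIsolated {d r k : ℕ} (hdeg : ∀ v, G.degree v ≤ d)
    (hr : r * (Fintype.card V - d) ≤ Fintype.card V) (hk : 1 ≤ k) :
    r * (Fintype.card V - d).choose k ≤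
      #{s : Finset V | #s = k ∧ ∃ v ∈ s, ∀ w ∈ s, ¬G.Adj v w} := by
  set m := Fintype.card V - d
  have hcompl (v : V) : m - 1 ≤ Gᶜ.degree v := by
    have := hdeg v
    rw [degree_compl]
    omega
  refine Nat.le_of_mul_le_mul_left ?_ hk
  calc k * (r * m.choose k) = r * m * (m - 1).choose (k - 1) := by
        rw [mul_left_comm, Nat.mul_choose_eq_mul_choose_sub_one m hk, mul_assoc]
    _ ≤ ∑ _v : V, (m - 1).choose (k - 1) := by
        rw [sum_const, card_univ, smul_eq_mul]
        exact Nat.mul_le_mul_right _ hr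
    _ ≤ ∑ v, (Gᶜ.degree v).choose (k - 1) :=
        sum_le_sum fun v _ => Nat.choose_le_choose _ (hcompl v)
    _ ≤ k * #{s : Finset V | #s = k ∧ ∃ v ∈ s, ∀ w ∈ s, ¬G.Adj v w} :=
        sum_choose_degree_compl_le_mul_card_hasIsolated hk

end

theorem numConnSets_add_le {d r : ℕ} (hdeg : ∀ v, G.degree v ≤ d)
    (hr : r * (Fintype.card V - d) ≤ Fintype.card V) :
    numConnSets G + (r * (2 ^ (Fintype.card V - d) - (Fintype.card V - d + 1)) + 1) ≤
      2 ^ Fintype.card V := by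
  classical
  set m := Fintype.card V - d
  set A : Finset (Finset V) := {s | ¬(G.induce (s : Set V)).Connected}
  let B (k : ℕ) : Finset (Finset V) := {s | #s = k ∧ ∃ v ∈ s, ∀ w ∈ s, ¬G.Adj v w}
  have hsplit : numConnSets G + #A = 2 ^ Fintype.card V := by
    rw [numConnSets, Nat.card_eq_fintype_card, Fintype.card_subtype,
      card_filter_add_card_filter_not, card_univ, Fintype.card_finset]
  have hempty : ∅ ∉ (Icc 2 m).biUnion B := by simp [B]
  have hsub : insert ∅ ((Icc 2 m).biUnion B) ⊆ A := by
    intro s hs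
    simp only [A, mem_filter, mem_univ, true_and]
    rcases mem_insert.mp hs with rfl | hs
    · exact fun hconn => by simpa using hconn.nonempty
    · obtain ⟨k, hk, hs⟩ := mem_biUnion.mp hs
      obtain ⟨-, rfl, v, hv, hiso⟩ := mem_filter.mp hs
      obtain ⟨w, hw, hwv⟩ := exists_mem_ne (by grind : 1 < #s) v
      exact not_connected_induce_of_forall_not_adj hv hw hwv hiso
  have hdisj : (Icc 2 m : Set ℕ).PairwiseDisjoint B := fun k _ l _ hkl =>
    Finset.disjoint_left.mpr fun _ hk hl =>
      hkl ((mem_filter.mp hk).2.1.symm.trans (mem_filter.mp hl).2.1)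
  calc numConnSets G + (r * (2 ^ m - (m + 1)) + 1)
      = numConnSets G + (∑ k ∈ Icc 2 m, r * m.choose k + 1) := by
        rw [← mul_sum, Nat.sum_Icc_two_choose]
    _ ≤ numConnSets G + (∑ k ∈ Icc 2 m, #(B k) + 1) := by
        gcongr with k hk
        exact mul_choose_le_card_hasIsolated hdeg hr (by simp at hk; omega)
    _ = numConnSets G + #(insert ∅ ((Icc 2 m).biUnion B)) := by
        rw [card_insert_of_notMem hempty, card_biUnion hdisj]
    _ ≤ numConnSets G + #A := by gcongr
    _ = 2 ^ Fintype.card V := hsplit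

end SimpleGraph

theorem stmt6_general {V : Type*} [Fintype V] (d n : ℕ) (G : SimpleGraph V) [DecidableRel G.Adj]
    (hcard : Fintype.card V = n) (hdeg : ∀ v, G.degree v ≤ d) :
    numConnSets G ≤ 2 ^ n - (n / (n - d)) * 2 ^ (n - d) + n + n / (n - d) - 1 := by
  subst hcard
  set m := Fintype.card V - d
  set r := Fintype.card V / m
  have hr : r * m ≤ Fintype.card V := Nat.div_mul_le_self _ _
  have hbound : numConnSets G + (r * (2 ^ m - (m + 1)) + 1) ≤ 2 ^ Fintype.card V :=
    numConnSets_add_le hdeg hr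
  have hpow : r * (2 ^ m - (m + 1)) + r * (m + 1) = r * 2 ^ m := by
    rw [← mul_add, Nat.sub_add_cancel Nat.lt_two_pow_self]
  have hlin : r * (m + 1) = r * m + r := by ring
  omega

theorem stmt6 {V : Type*} [Fintype V] (d n : ℕ) (hd : 2 ≤ d) (hn : d + 1 ≤ n)
    (hdvd : (n - d) ∣ n) (G : SimpleGraph V) [DecidableRel G.Adj]
    (hcard : Fintype.card V = n) (hdeg : ∀ v, G.degree v ≤ d) :
    numConnSets G ≤ 2 ^ n - (n / (n - d)) * 2 ^ (n - d) + n + n / (n - d) - 1 :=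
  stmt6_general d n G hcard hdeg
end

section
/- Let d ≥ 2 and n ≥ d+1 with (n − d) dividing n, and set r = n/(n − d). The complete balanced r-partite graph with parts of size n − d (which is d-regular of order n) attains N(G) = 2^n − r·2^{n−d} + n + r − 1, i.e., equality in the upper bound on the number of nonempty connected vertex subsets among graphs with maximum degree at most d. -/
open SimpleGraph

/-!
A set of vertices of a complete multipartite graph induces a connected subgraph iff it is a
single vertex or meets two different parts: a set inside one part spans no edge, and two vertices
of the same part are joined through any vertex of another part. So, of all `2 ^ n` vertex sets,
the ones that fail are the empty set and the sets of size at least two inside a single part,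
`∑ i, (2 ^ |V i| - |V i| - 1)` many.
-/

open Finset

namespace SimpleGraph.completeMultipartiteGraph

variable {ι : Type*} {V : ι → Type*}

theorem connected_induce_iff {s : Set (Σ i, V i)} :
    ((completeMultipartiteGraph V).induce s).Connected ↔
      (∃ x, s = {x}) ∨ ∃ a ∈ s, ∃ b ∈ s, a.1 ≠ b.1 := by
  constructor
  · intro hconn
    by_contra! h
    have hbot : (completeMultipartiteGraph V).induce s = ⊥ := by
      ext u v
      simpa [completeMultipartiteGraph] using h.2 u u.2 v v.2
    rw [hbot, connected_bot_iff, Set.subsingleton_coe, Set.nonempty_coe_sort] at hconn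
    obtain ⟨x, hx⟩ := Set.exists_eq_singleton_iff_nonempty_subsingleton.mpr hconn.symm
    exact h.1 x hx
  · rintro (⟨x, rfl⟩ | ⟨a, ha, b, hb, hab⟩)
    · exact .of_subsingleton
    have hadj {u v : s} (huv : u.1.1 ≠ v.1.1) :
        ((completeMultipartiteGraph V).induce s).Adj u v := by
      simpa [completeMultipartiteGraph] using huv
    refine (connected_iff_exists_forall_reachable _).mpr ⟨⟨a, ha⟩, fun v => ?_⟩
    by_cases hav : a.1 = v.1.1
    · have hbv : (⟨b, hb⟩ : s).1.1 ≠ v.1.1 := fun h => hab (hav.trans h.symm)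
      exact (hadj hab).reachable.trans (hadj hbv).reachable
    · exact (hadj hav).reachable

end SimpleGraph.completeMultipartiteGraph

theorem Finset.card_filter_nonempty_forall_fst_eq {ι : Type*} {V : ι → Type*} [Fintype ι]
    [DecidableEq ι] [∀ i, Fintype (V i)] :
    #{s : Finset (Σ i, V i) | s.Nonempty ∧ ∀ a ∈ s, ∀ b ∈ s, a.1 = b.1} =
      ∑ i, (2 ^ Fintype.card (V i) - 1) := by
  classical
  have hpart (i : ι) : #{t : Finset (V i) | t.Nonempty} = 2 ^ Fintype.card (V i) - 1 := by
    simp_rw [nonempty_iff_ne_empty, filter_ne', card_erase_of_mem (mem_univ _), card_univ,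
      Fintype.card_finset]
  simp_rw [← hpart, ← card_sigma]
  symm
  refine card_bij (fun p _ => p.2.map (.sigmaMk p.1)) ?_ ?_ ?_
  · rintro ⟨i, t⟩ ht
    simp_all
  · rintro ⟨i, t⟩ ht ⟨j, u⟩ - htu
    obtain ⟨x, hx⟩ := (mem_filter.mp (mem_sigma.mp ht).2).2
    have hxu : (⟨i, x⟩ : Σ i, V i) ∈ u.map (.sigmaMk j) := htu ▸ mem_map_of_mem _ hx
    obtain ⟨y, -, hy⟩ := mem_map.mp hxu
    obtain rfl : j = i := congrArg Sigma.fst hy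
    obtain rfl := map_injective _ htu
    rfl
  · rintro s hs
    simp only [mem_filter, mem_univ, true_and] at hs
    obtain ⟨⟨⟨i, x⟩, hx⟩, hfst⟩ := hs
    refine ⟨⟨i, s.preimage (Sigma.mk i) sigma_mk_injective.injOn⟩,
      by simpa using ⟨x, mem_preimage.mpr hx⟩, ?_⟩
    ext ⟨j, y⟩
    simp only [mem_map, mem_preimage, Function.Embedding.sigmaMk_apply]
    refine ⟨fun ⟨z, hz, hzy⟩ => hzy ▸ hz, fun hy => ?_⟩
    obtain rfl : i = j := hfst _ hx _ hy
    exact ⟨y, hy, rfl⟩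

theorem numConnSets_completeMultipartiteGraph {ι : Type*} {V : ι → Type*} [Fintype ι]
    [∀ i, Fintype (V i)] :
    numConnSets (completeMultipartiteGraph V) + ∑ i, 2 ^ Fintype.card (V i) + 1 =
      2 ^ Fintype.card (Σ i, V i) + Fintype.card (Σ i, V i) + Fintype.card ι := by
  classical
  set n := Fintype.card (Σ i, V i)
  let MeetsTwoParts (s : Finset (Σ i, V i)) : Prop := ∃ a ∈ s, ∃ b ∈ s, a.1 ≠ b.1
  have hconn : numConnSets (completeMultipartiteGraph V) = n + #{s | MeetsTwoParts s} := by
    have hiff (s : Finset (Σ i, V i)) :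
        ((completeMultipartiteGraph V).induce (s : Set (Σ i, V i))).Connected ↔
          s.card = 1 ∨ MeetsTwoParts s := by
      simp only [completeMultipartiteGraph.connected_induce_iff, coe_eq_singleton, mem_coe,
        card_eq_one, MeetsTwoParts]
    have hdisj : Disjoint (univ.filter fun s : Finset (Σ i, V i) => s.card = 1)
        (univ.filter MeetsTwoParts) := by
      refine disjoint_filter.mpr fun s _ hs ⟨a, ha, b, hb, hab⟩ => hab ?_
      obtain ⟨x, rfl⟩ := card_eq_one.mp hs
      rw [mem_singleton.mp ha, mem_singleton.mp hb]
    rw [numConnSets, Nat.card_eq_fintype_card, Fintype.card_subtype,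
      filter_congr fun s _ => hiff s, filter_or, card_union_of_disjoint hdisj,
      univ_filter_card_eq, card_powersetCard, card_univ, Nat.choose_one_right]
  have htotal : #{s | MeetsTwoParts s} + #{s | ¬ MeetsTwoParts s} = 2 ^ n := by
    rw [card_filter_add_card_filter_not, card_univ, Fintype.card_finset]
  have hwithin : #{s | ¬ MeetsTwoParts s} = ∑ i, (2 ^ Fintype.card (V i) - 1) + 1 := by
    have hempty : univ.filter (¬ MeetsTwoParts ·) =
        insert ∅ (univ.filter fun s => s.Nonempty ∧ ∀ a ∈ s, ∀ b ∈ s, a.1 = b.1) := by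
      ext s
      rcases s.eq_empty_or_nonempty with rfl | hs
      · simp [MeetsTwoParts]
      · simp [MeetsTwoParts, hs, hs.ne_empty, Sigma.forall]
    rw [hempty, card_insert_of_notMem (by simp)]
    have hone := card_filter_nonempty_forall_fst_eq (V := V)
    convert congrArg (· + 1) hone
  have hsum : ∑ i, 2 ^ Fintype.card (V i) =
      ∑ i, (2 ^ Fintype.card (V i) - 1) + Fintype.card ι := by
    rw [← card_univ, card_eq_sum_ones, ← sum_add_distrib]
    exact sum_congr rfl fun i _ => (Nat.sub_add_cancel Nat.one_le_two_pow).symm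
  omega

theorem mul_two_pow_le_two_pow_mul (r : ℕ) {m : ℕ} (hm : 1 ≤ m) : r * 2 ^ m ≤ 2 ^ (r * m) := by
  cases r with
  | zero => simp
  | succ k =>
    have hk : k + 1 ≤ 2 ^ (k * m) :=
      (Nat.lt_two_pow_self).trans_le (Nat.pow_le_pow_right two_pos (Nat.le_mul_of_pos_right k hm))
    calc (k + 1) * 2 ^ m ≤ 2 ^ (k * m) * 2 ^ m := Nat.mul_le_mul_right _ hk
      _ = 2 ^ ((k + 1) * m) := by rw [← pow_add, Nat.succ_mul]

theorem stmt7_general (d n : ℕ) (hn : d + 1 ≤ n) (hdvd : (n - d) ∣ n) :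
    numConnSets (completeMultipartiteGraph (fun _ : Fin (n / (n - d)) => Fin (n - d))) =
      2 ^ n - (n / (n - d)) * 2 ^ (n - d) + n + n / (n - d) - 1 := by
  have hcount :=
    numConnSets_completeMultipartiteGraph (V := fun _ : Fin (n / (n - d)) => Fin (n - d))
  have hrm : n / (n - d) * (n - d) = n := Nat.div_mul_cancel hdvd
  simp only [Fintype.card_sigma, Fintype.card_fin, sum_const, card_univ, smul_eq_mul, hrm]
    at hcount
  -- makes the truncated subtraction `2 ^ n - n / (n - d) * 2 ^ (n - d)` in the claim exact
  have hle : n / (n - d) * 2 ^ (n - d) ≤ 2 ^ n := by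
    simpa only [hrm] using mul_two_pow_le_two_pow_mul (n / (n - d)) (m := n - d) (by omega)
  omega

theorem stmt7 (d n : ℕ) (hd : 2 ≤ d) (hn : d + 1 ≤ n) (hdvd : (n - d) ∣ n) :
    numConnSets (completeMultipartiteGraph (fun _ : Fin (n / (n - d)) => Fin (n - d))) =
      2 ^ n - (n / (n - d)) * 2 ^ (n - d) + n + n / (n - d) - 1 :=
  stmt7_general d n hn hdvd
end

section
/- Let d ≥ 2 and n ≥ d+2 with (n − d) dividing n, and set r = n/(n − d). For every graph G on n vertices with maximum degree at most d, the number of connected dominating sets satisfies N_dom(G) ≤ 2^n − r·2^{n−d} + r − 1, with equality for the balanced complete r-partite graph. -/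
open SimpleGraph

/-- The number of connected dominating vertex subsets of `G`. -/
noncomputable def numConnDomSets {V : Type*} (G : SimpleGraph V) : ℕ :=
  Nat.card {s : Finset V // (G.induce (s : Set V)).Connected ∧
    ∀ v, v ∉ s → ∃ u ∈ s, G.Adj u v}

/-!
A connected dominating set `s` has no vertex `v` that is isolated in `G[s]` once `v` has a
second non-neighbour `u`: if `s ≠ {v}` then `G[s]` is disconnected, and if `s = {v}` then `u` is
not dominated. So `∅` and the sets with an isolated vertex are never connected dominating.

With `k = n - d`, every vertex has at least `k` non-neighbours, itself included. Weighting each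
pair (`s`, `v` isolated in `G[s]`) by `1 / |s|` counts every such set at most once, and the sets
`s ∋ v` inside a `k`-set of non-neighbours of `v` already carry weight
`∑ⱼ C(k-1, j) / (j+1) = (2^k - 1) / k`; summing over the `n = r k` vertices gives at least
`r (2^k - 1)` sets with an isolated vertex. In the complete `r`-partite graph the excluded sets
are exactly `∅` and the nonempty subsets of a single part, so the bound is attained.
-/

open Finset

theorem Finset.card_biUnion_eq_sum_sum_inv_card {ι β : Type*} [DecidableEq β]
    (I : Finset ι) (F : ι → Finset β) :
    (#(I.biUnion F) : ℚ) = ∑ i ∈ I, ∑ b ∈ F i, 1 / (#{j ∈ I | b ∈ F j} : ℚ) := by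
  rw [sum_comm' (t' := I.biUnion F) (s' := fun b => {j ∈ I | b ∈ F j})
    (fun i b => by simp only [mem_filter, mem_biUnion]; exact ⟨fun h => ⟨h, i, h⟩, And.left⟩),
    card_eq_sum_ones, Nat.cast_sum]
  refine sum_congr rfl fun b hb => ?_
  obtain ⟨i, hi, hbi⟩ := mem_biUnion.1 hb
  have hpos : (0 : ℚ) < #{j ∈ I | b ∈ F j} := by
    exact_mod_cast card_pos.2 ⟨i, mem_filter.2 ⟨hi, hbi⟩⟩
  rw [sum_const, nsmul_eq_mul, mul_one_div_cancel hpos.ne', Nat.cast_one]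

theorem Nat.sum_range_choose_div_add_one (m : ℕ) :
    ∑ j ∈ range (m + 1), (m.choose j : ℚ) / (j + 1) = (2 ^ (m + 1) - 1) / (m + 1) := by
  have hterm (j : ℕ) : (m.choose j : ℚ) / (j + 1) = (m + 1).choose (j + 1) / (m + 1) := by
    rw [div_eq_div_iff (by positivity) (by positivity), mul_comm]
    exact_mod_cast Nat.add_one_mul_choose_eq m j
  have hsum := Nat.sum_range_choose (m + 1)
  rw [sum_range_succ', Nat.choose_zero_right] at hsum
  simp_rw [hterm, ← sum_div]
  congr 1
  rw [eq_sub_iff_add_eq]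
  exact_mod_cast hsum

theorem Finset.sum_powerset_inv_card_insert {α : Type*} [DecidableEq α] {v : α} {B : Finset α}
    (hv : v ∉ B) :
    ∑ t ∈ B.powerset, 1 / (#(insert v t) : ℚ) = (2 ^ (#B + 1) - 1) / (#B + 1) := by
  have hcard : ∀ t ∈ B.powerset, #(insert v t) = #t + 1 := fun t ht =>
    card_insert_of_notMem fun h => hv (mem_powerset.1 ht h)
  rw [sum_congr rfl fun t ht => by rw [hcard t ht],
    sum_powerset_apply_card (fun j => 1 / ((j + 1 : ℕ) : ℚ)),
    ← Nat.sum_range_choose_div_add_one]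
  push_cast
  simp only [nsmul_eq_mul, mul_one_div]

namespace SimpleGraph

variable {V : Type*} (G : SimpleGraph V)

def IsConnDomSet (s : Finset V) : Prop :=
  (G.induce (s : Set V)).Connected ∧ ∀ v, v ∉ s → ∃ u ∈ s, G.Adj u v

theorem numConnDomSets_eq_card [Fintype V] [DecidablePred G.IsConnDomSet] :
    numConnDomSets G = #{s | G.IsConnDomSet s} := by
  rw [← Fintype.card_subtype, ← Nat.card_eq_fintype_card]
  rfl

variable {G}

theorem not_isConnDomSet_of_isolated {s : Finset V} {u v : V} (hv : v ∈ s)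
    (hiso : ∀ w ∈ s, ¬ G.Adj v w) (huv : u ≠ v) (hvu : ¬ G.Adj v u) : ¬ G.IsConnDomSet s := by
  rintro ⟨hconn, hdom⟩
  by_cases hw : ∃ w ∈ s, w ≠ v
  · obtain ⟨w, hws, hwv⟩ := hw
    have : Nontrivial (s : Set V) :=
      ⟨⟨⟨v, hv⟩, ⟨w, hws⟩, fun h => hwv (congrArg Subtype.val h).symm⟩⟩
    obtain ⟨⟨x, hx⟩, hadj⟩ := hconn.preconnected.exists_adj_of_nontrivial ⟨v, hv⟩
    exact hiso x hx hadj
  · push Not at hw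
    obtain ⟨w, hws, hwu⟩ := hdom u fun hus => huv (hw u hus)
    exact hvu (hw w hws ▸ hwu)

theorem IsConnDomSet.nonempty {s : Finset V} (hs : G.IsConnDomSet s) : s.Nonempty := by
  obtain ⟨⟨v, hv⟩⟩ := hs.1.nonempty
  exact ⟨v, hv⟩

section Finite

variable [Fintype V] [DecidableEq V] [DecidableRel G.Adj]

variable (G) in
def isolatingSets (v : V) : Finset (Finset V) :=
  {s ∈ (G.neighborFinset v)ᶜ.powerset | v ∈ s}

theorem mem_isolatingSets {v : V} {s : Finset V} :
    s ∈ G.isolatingSets v ↔ v ∈ s ∧ ∀ w ∈ s, ¬ G.Adj v w := by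
  simp [isolatingSets, subset_iff, and_comm]

theorem IsConnDomSet.notMem_isolatingSets {s : Finset V} {v : V} (hs : G.IsConnDomSet s)
    (hdeg : G.degree v + 2 ≤ Fintype.card V) : s ∉ G.isolatingSets v := by
  intro hsv
  obtain ⟨hv, hiso⟩ := mem_isolatingSets.1 hsv
  have hcard : 1 < #(G.neighborFinset v)ᶜ := by
    rw [card_compl, card_neighborFinset_eq_degree]; omega
  obtain ⟨u, hu, huv⟩ := exists_mem_ne hcard v
  exact not_isConnDomSet_of_isolated hv hiso huv (by simpa using hu) hs

theorem two_pow_sub_one_div_le_sum_isolatingSets_inv_card {k : ℕ} {v : V} (hk : 0 < k)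
    (hdeg : G.degree v + k ≤ Fintype.card V) :
    ((2 : ℚ) ^ k - 1) / k ≤ ∑ s ∈ G.isolatingSets v, 1 / (#s : ℚ) := by
  have hle : k - 1 ≤ #((G.neighborFinset v)ᶜ.erase v) := by
    rw [card_erase_of_mem (by simp), card_compl, card_neighborFinset_eq_degree]; omega
  obtain ⟨B, hB, hBcard⟩ := exists_subset_card_eq hle
  have hvB : v ∉ B := fun h => by simpa using hB h
  have hsub : B.powerset.image (insert v) ⊆ G.isolatingSets v := by
    intro s hs
    obtain ⟨t, ht, rfl⟩ := mem_image.1 hs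
    simp only [isolatingSets, mem_filter, mem_powerset, mem_insert_self, and_true]
    exact insert_subset (by simp) ((mem_powerset.1 ht).trans (hB.trans (erase_subset _ _)))
  calc ((2 : ℚ) ^ k - 1) / k = ∑ t ∈ B.powerset, 1 / (#(insert v t) : ℚ) := by
        rw [sum_powerset_inv_card_insert hvB, hBcard, Nat.sub_add_cancel hk,
          Nat.cast_sub hk, Nat.cast_one, sub_add_cancel]
    _ = ∑ s ∈ B.powerset.image (insert v), 1 / (#s : ℚ) :=
        (sum_image (f := fun s => 1 / (#s : ℚ)) (g := insert v) fun t ht t' ht' h => by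
          rw [← erase_insert (notMem_mono (mem_powerset.1 ht) hvB), h,
            erase_insert (notMem_mono (mem_powerset.1 ht') hvB)]).symm
    _ ≤ ∑ s ∈ G.isolatingSets v, 1 / (#s : ℚ) :=
        sum_le_sum_of_subset_of_nonneg hsub fun _ _ _ => by positivity

theorem card_mul_le_mul_card_biUnion_isolatingSets {k : ℕ}
    (hdeg : ∀ v, G.degree v + k ≤ Fintype.card V) :
    Fintype.card V * (2 ^ k - 1) ≤ k * #(univ.biUnion G.isolatingSets) := by
  rcases k.eq_zero_or_pos with rfl | hk
  · simp
  set U := univ.biUnion G.isolatingSets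
  have hmult : ∀ v, ∀ s ∈ G.isolatingSets v,
      1 / (#s : ℚ) ≤ 1 / (#{w ∈ univ | s ∈ G.isolatingSets w} : ℚ) := by
    intro v s hs
    apply one_div_le_one_div_of_le
    · exact_mod_cast card_pos.2 ⟨v, mem_filter.2 ⟨mem_univ _, hs⟩⟩
    · exact_mod_cast card_le_card fun w hw => (mem_isolatingSets.1 (mem_filter.1 hw).2).1
  have key : (Fintype.card V : ℚ) * ((2 ^ k - 1) / k) ≤ #U := by
    rw [card_biUnion_eq_sum_sum_inv_card, ← card_univ, ← nsmul_eq_mul, ← sum_const]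
    exact sum_le_sum fun v _ =>
      (two_pow_sub_one_div_le_sum_isolatingSets_inv_card hk (hdeg v)).trans (sum_le_sum (hmult v))
  rw [mul_div_assoc', div_le_iff₀ (by exact_mod_cast hk)] at key
  have h2k : 1 ≤ 2 ^ k := Nat.one_le_two_pow
  have hQ : ((Fintype.card V * (2 ^ k - 1) : ℕ) : ℚ) ≤ ((k * #U : ℕ) : ℚ) := by
    push_cast [h2k]
    linarith
  exact_mod_cast hQ

theorem numConnDomSets_add_card_biUnion_isolatingSets_lt
    (hdeg : ∀ v, G.degree v + 2 ≤ Fintype.card V) :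
    numConnDomSets G + #(univ.biUnion G.isolatingSets) < 2 ^ Fintype.card V := by
  classical
  set U := univ.biUnion G.isolatingSets
  set C : Finset (Finset V) := {s | G.IsConnDomSet s}
  have hempty : ∅ ∉ U := by simp [U, mem_isolatingSets]
  have hdisj : Disjoint C (insert ∅ U) := by
    refine Finset.disjoint_left.2 fun s hs hs' => ?_
    replace hs := (mem_filter.1 hs).2
    rcases mem_insert.1 hs' with rfl | hs'
    · simpa using hs.nonempty
    · obtain ⟨v, -, hv⟩ := mem_biUnion.1 hs'
      exact hs.notMem_isolatingSets (hdeg v) hv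
  have hle := card_le_univ (C ∪ insert ∅ U)
  rw [card_union_of_disjoint hdisj, card_insert_of_notMem hempty, Fintype.card_finset,
    ← numConnDomSets_eq_card] at hle
  omega

theorem numConnDomSets_le {k r : ℕ} (hk : 2 ≤ k) (hcard : Fintype.card V = r * k)
    (hdeg : ∀ v, G.degree v + k ≤ Fintype.card V) :
    numConnDomSets G ≤ 2 ^ (r * k) - r * 2 ^ k + r - 1 := by
  have hU := card_mul_le_mul_card_biUnion_isolatingSets hdeg
  rw [hcard, mul_right_comm, mul_comm] at hU
  replace hU := Nat.le_of_mul_le_mul_left hU (by omega)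
  have hN := numConnDomSets_add_card_biUnion_isolatingSets_lt (G := G) fun v => by
    have := hdeg v; omega
  rw [hcard] at hN
  have hr : r * (2 ^ k - 1) + r = r * 2 ^ k := by
    rw [Nat.mul_sub_one, Nat.sub_add_cancel (Nat.le_mul_of_pos_right r (Nat.two_pow_pos k))]
  omega

end Finite

section CompleteMultipartite

variable {ι : Type*} {W : ι → Type*}

theorem isConnDomSet_completeMultipartiteGraph_iff [∀ i, Nontrivial (W i)]
    {s : Finset (Σ i, W i)} :
    (completeMultipartiteGraph W).IsConnDomSet s ↔ ∃ x ∈ s, ∃ y ∈ s, x.1 ≠ y.1 := by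
  set H := completeMultipartiteGraph W
  have hadj : ∀ x y, H.Adj x y ↔ x.1 ≠ y.1 := fun _ _ => Iff.rfl
  constructor
  · intro hs
    by_contra! h
    obtain ⟨x, hx⟩ := hs.nonempty
    obtain ⟨j, hj⟩ := exists_ne x.2
    have hjx : (⟨x.1, j⟩ : Σ i, W i) ≠ x := by rcases x; simpa using hj
    exact not_isConnDomSet_of_isolated hx (fun y hy hxy => (hadj x y).1 hxy (h x hx y hy)) hjx
      (by simp [hadj]) hs
  · rintro ⟨x, hx, y, hy, hxy⟩
    have hdom : ∀ z, H.Adj x z ∨ H.Adj y z := by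
      intro z
      by_contra! h
      simp only [hadj, not_not] at h
      exact hxy (h.1.trans h.2.symm)
    refine ⟨(connected_iff_exists_forall_reachable _).2 ⟨⟨x, hx⟩, fun ⟨z, hz⟩ => ?_⟩,
      fun z _ => ?_⟩
    · have hxy' : (H.induce (s : Set _)).Adj ⟨x, hx⟩ ⟨y, hy⟩ := (hadj x y).2 hxy
      rcases hdom z with h | h
      · exact Adj.reachable (show (H.induce (s : Set _)).Adj ⟨x, hx⟩ ⟨z, hz⟩ from h)
      · exact hxy'.reachable.trans
          (Adj.reachable (show (H.induce (s : Set _)).Adj ⟨y, hy⟩ ⟨z, hz⟩ from h))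
    · rcases hdom z with h | h
      exacts [⟨x, hx, h⟩, ⟨y, hy, h⟩]

theorem numConnDomSets_completeMultipartiteGraph_add_sum_add_one [Fintype ι]
    [∀ i, Fintype (W i)] [∀ i, Nontrivial (W i)] :
    numConnDomSets (completeMultipartiteGraph W) + ∑ i, (2 ^ Fintype.card (W i) - 1) + 1 =
      2 ^ Fintype.card (Σ i, W i) := by
  classical
  set part : ι → Finset (Σ i, W i) := fun i => univ.map (Function.Embedding.sigmaMk i)
  have mem_part : ∀ i x, x ∈ part i ↔ x.1 = i := by
    rintro i ⟨j, a⟩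
    simp only [part, mem_map, mem_univ, true_and, Function.Embedding.sigmaMk_apply]
    constructor
    · rintro ⟨b, hb⟩; cases hb; rfl
    · rintro rfl; exact ⟨a, rfl⟩
  set T := univ.biUnion fun i => (part i).powerset.erase ∅
  have hT : #T = ∑ i, (2 ^ Fintype.card (W i) - 1) := by
    rw [card_biUnion]
    · simp [part, card_erase_of_mem]
    intro i _ j _ hij
    refine Finset.disjoint_left.2 fun t hti htj => ?_
    simp only [mem_erase, mem_powerset] at hti htj
    obtain ⟨x, hx⟩ := nonempty_iff_ne_empty.2 hti.1
    exact hij (((mem_part i x).1 (hti.2 hx)).symm.trans ((mem_part j x).1 (htj.2 hx)))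
  have hcompl : ({s | ¬ (completeMultipartiteGraph W).IsConnDomSet s} : Finset _) =
      insert ∅ T := by
    ext s
    simp only [mem_filter, mem_univ, true_and, isConnDomSet_completeMultipartiteGraph_iff,
      mem_insert, T, mem_biUnion, mem_erase, mem_powerset]
    push Not
    constructor
    · intro h
      rcases s.eq_empty_or_nonempty with rfl | ⟨x, hx⟩
      · exact Or.inl rfl
      · exact Or.inr ⟨x.1, ⟨x, hx⟩, fun y hy => (mem_part _ _).2 (h y hy x hx)⟩
    · rintro (rfl | ⟨i, -, hsi⟩) x hx y hy
      · simp at hx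
      · exact ((mem_part i x).1 (hsi hx)).trans ((mem_part i y).1 (hsi hy)).symm
  have hempty : ∅ ∉ T := by simp [T]
  rw [numConnDomSets_eq_card, add_assoc, ← hT, ← card_insert_of_notMem hempty, ← hcompl,
    card_filter_add_card_filter_not, card_univ, Fintype.card_finset]

theorem numConnDomSets_completeMultipartiteGraph_fin {r k : ℕ} (hk : 2 ≤ k) :
    numConnDomSets (completeMultipartiteGraph fun _ : Fin r => Fin k) =
      2 ^ (r * k) - r * 2 ^ k + r - 1 := by
  have : Nontrivial (Fin k) := Fin.nontrivial_iff_two_le.2 hk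
  have h := numConnDomSets_completeMultipartiteGraph_add_sum_add_one (W := fun _ : Fin r => Fin k)
  simp only [Fintype.card_fin, sum_const, card_univ, smul_eq_mul, Fintype.card_sigma] at h
  have hr : r * (2 ^ k - 1) + r = r * 2 ^ k := by
    rw [Nat.mul_sub_one, Nat.sub_add_cancel (Nat.le_mul_of_pos_right r (Nat.two_pow_pos k))]
  have hpow : r * 2 ^ k ≤ 2 ^ (r * k) := by
    rw [Nat.mul_comm r k, pow_mul, Nat.mul_comm]
    exact Nat.mul_le_pow (Nat.one_lt_two_pow (by omega)).ne' r
  omega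

end CompleteMultipartite

end SimpleGraph

theorem stmt8_general (d n : ℕ) (hn : d + 2 ≤ n) (hdvd : (n - d) ∣ n) :
    (∀ (V : Type) [Fintype V] (G : SimpleGraph V) [DecidableRel G.Adj],
      Fintype.card V = n → (∀ v, G.degree v ≤ d) →
      numConnDomSets G ≤ 2 ^ n - (n / (n - d)) * 2 ^ (n - d) + n / (n - d) - 1) ∧
    numConnDomSets (completeMultipartiteGraph (fun _ : Fin (n / (n - d)) => Fin (n - d))) =
      2 ^ n - (n / (n - d)) * 2 ^ (n - d) + n / (n - d) - 1 := by
  have hk : 2 ≤ n - d := by omega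
  have hrk : n / (n - d) * (n - d) = n := Nat.div_mul_cancel hdvd
  refine ⟨fun V _ G _ hcard hdeg => ?_, ?_⟩
  · classical
    have h := numConnDomSets_le (G := G) hk (hcard.trans hrk.symm) fun v => by
      have := hdeg v; omega
    rwa [hrk] at h
  · rw [numConnDomSets_completeMultipartiteGraph_fin hk, hrk]

theorem stmt8 (d n : ℕ) (hd : 2 ≤ d) (hn : d + 2 ≤ n) (hdvd : (n - d) ∣ n) :
    (∀ (V : Type) [Fintype V] (G : SimpleGraph V) [DecidableRel G.Adj],
      Fintype.card V = n → (∀ v, G.degree v ≤ d) →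
      numConnDomSets G ≤ 2 ^ n - (n / (n - d)) * 2 ^ (n - d) + n / (n - d) - 1) ∧
    numConnDomSets (completeMultipartiteGraph (fun _ : Fin (n / (n - d)) => Fin (n - d))) =
      2 ^ n - (n / (n - d)) * 2 ^ (n - d) + n / (n - d) - 1 :=
  stmt8_general d n hn hdvd
end

section
/- Let G be K_{d,d−1} (d ≥ 2) together with a perfect matching M of d/2 edges added on the bipartition class of size d (d even). Then the number of nonempty connected vertex subsets is N(G) = (2^d − 1)(2^{d−1} − 1) + 5d/2 − 1. -/
open SimpleGraph

/-- `K_{d,d-1}` together with a perfect matching on the part of size `d`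
(pairing vertices `2i` and `2i+1`). -/
def KddMinusOnePlusMatching (d : ℕ) : SimpleGraph (Fin d ⊕ Fin (d - 1)) :=
  completeBipartiteGraph (Fin d) (Fin (d - 1)) ⊔
    fromRel (fun a b => ∃ a' b' : Fin d, a = Sum.inl a' ∧ b = Sum.inl b' ∧
      (a' : ℕ) / 2 = (b' : ℕ) / 2)

/-!
A vertex set meeting both sides of `K_{d,d-1}` is connected, since every left vertex is adjacent
to every right vertex, while a set inside one side is connected exactly when it is connected in
the graph induced on that side. Hence `N(G) = (2^d - 1)(2^(d-1) - 1) + N(G[A]) + N(G[B])`. On each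
side every vertex has at most one neighbour, so the connected sets there are the single vertices
and the edges: `d + d/2` of them on `A`, which carries a perfect matching, and `d - 1` on `B`,
which carries no edges.
-/

open Finset

lemma Sym2.toFinset_injective {α : Type*} [DecidableEq α] :
    Function.Injective (Sym2.toFinset : Sym2 α → Finset α) := fun z z' h =>
  Sym2.ext fun x => by rw [← Sym2.mem_toFinset, h, Sym2.mem_toFinset]

lemma Finset.card_filter_nonempty_univ (α : Type*) [Fintype α] :
    #{t : Finset α | t.Nonempty} = 2 ^ Fintype.card α - 1 := by
  classical
  simp_rw [nonempty_iff_ne_empty, filter_ne', card_erase_of_mem (mem_univ _), card_univ,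
    Fintype.card_finset]

namespace SimpleGraph

variable {V W : Type*}

lemma numConnSets_eq_card_filter [Fintype V] (G : SimpleGraph V)
    [DecidablePred fun s : Finset V => (G.induce (s : Set V)).Connected] :
    numConnSets G = #{s : Finset V | (G.induce (s : Set V)).Connected} := by
  rw [numConnSets, Nat.card_eq_fintype_card, Fintype.card_subtype]

noncomputable def induceComapIso (f : V ↪ W) (G : SimpleGraph W) (t : Set V) :
    (G.comap f).induce t ≃g G.induce (f '' t) where
  toEquiv := Equiv.Set.image f t f.injective
  map_rel_iff' := by simp

lemma connected_induce_map_iff (f : V ↪ W) (G : SimpleGraph W) (t : Finset V) :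
    (G.induce (t.map f : Set W)).Connected ↔ ((G.comap f).induce (t : Set V)).Connected := by
  rw [coe_map]
  exact (induceComapIso f G t).connected_iff.symm

lemma not_connected_induce_empty (G : SimpleGraph V) :
    ¬ (G.induce ((∅ : Finset V) : Set V)).Connected :=
  fun h => by simpa using h.nonempty

section MaxDegreeOne

variable {G : SimpleGraph V} (hG : ∀ v, (G.neighborSet v).Subsingleton)
include hG

lemma Reachable.eq_or_adj_of_subsingleton_neighborSet {u w : V} (h : G.Reachable u w) :
    u = w ∨ G.Adj u w := by
  obtain ⟨p⟩ := h
  induction p with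
  | nil => exact .inl rfl
  | cons hadj _ ih =>
    rcases ih with rfl | h'
    · exact .inr hadj
    · exact .inl (hG _ hadj.symm h')

lemma connected_induce_iff_of_subsingleton_neighborSet [DecidableEq V] (s : Finset V) :
    (G.induce (s : Set V)).Connected ↔
      (∃ v, {v} = s) ∨ ∃ e ∈ G.edgeSet, e.toFinset = s := by
  constructor
  · intro hs
    obtain ⟨⟨v, hv⟩⟩ := hs.nonempty
    have hnbr : ∀ w ∈ s, v = w ∨ G.Adj v w := fun w hw =>
      ((hs ⟨v, hv⟩ ⟨w, hw⟩).map (Embedding.induce _).toHom).eq_or_adj_of_subsingleton_neighborSet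
        hG
    by_cases hsing : ∃ w ∈ s, w ≠ v
    swap
    · exact .inl ⟨v, (eq_singleton_iff_unique_mem.2 ⟨hv, by simpa using hsing⟩).symm⟩
    obtain ⟨w, hw, hwv⟩ := hsing
    have hvw : G.Adj v w := (hnbr w hw).resolve_left (Ne.symm hwv)
    refine .inr ⟨s(v, w), hvw, ?_⟩
    ext x
    simp only [Sym2.mem_toFinset, Sym2.mem_iff]
    refine ⟨?_, fun hx => ?_⟩
    · rintro (rfl | rfl) <;> assumption
    · exact (hnbr x hx).imp Eq.symm fun hvx => hG v hvx hvw
  · rintro (⟨v, rfl⟩ | ⟨e, he, rfl⟩)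
    · rw [coe_singleton, induce_singleton_eq_top]
      exact connected_top
    · induction e with
      | h a b =>
        rw [Sym2.toFinset_mk_eq, coe_pair]
        exact induce_pair_connected_of_adj he

lemma numConnSets_eq_of_subsingleton_neighborSet [Fintype V] [Fintype G.edgeSet] :
    numConnSets G = Fintype.card V + #G.edgeFinset := by
  classical
  have hconn : ({s | (G.induce (s : Set V)).Connected} : Finset (Finset V)) =
      univ.image ({·}) ∪ G.edgeFinset.image Sym2.toFinset := by
    ext s
    simp [connected_induce_iff_of_subsingleton_neighborSet hG]
  have hdisj : Disjoint (univ.image ({·})) (G.edgeFinset.image Sym2.toFinset) := by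
    rw [Finset.disjoint_left]
    intro s hs hs'
    obtain ⟨v, -, rfl⟩ := mem_image.1 hs
    obtain ⟨e, he, hev⟩ := mem_image.1 hs'
    rw [mem_edgeFinset] at he
    have := Sym2.card_toFinset_of_not_isDiag e (G.not_isDiag_of_mem_edgeSet he)
    simp [hev] at this
  rw [numConnSets_eq_card_filter, hconn, card_union_of_disjoint hdisj,
    card_image_of_injective _ singleton_injective, card_univ,
    card_image_of_injective _ Sym2.toFinset_injective]

end MaxDegreeOne

lemma numConnSets_bot [Fintype V] : numConnSets (⊥ : SimpleGraph V) = Fintype.card V := by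
  classical
  rw [numConnSets_eq_of_subsingleton_neighborSet (by simp), edgeFinset_bot, card_empty, add_zero]

lemma IsRegularOfDegree.two_mul_card_edgeFinset [Fintype V] {G : SimpleGraph V}
    [DecidableRel G.Adj] {k : ℕ} (h : G.IsRegularOfDegree k) :
    2 * #G.edgeFinset = k * Fintype.card V := by
  rw [← sum_degrees_eq_twice_card_edges]
  simp [h.degree_eq, mul_comm]

section CompleteBipartite

variable {α β : Type*} {G : SimpleGraph (α ⊕ β)} (hG : completeBipartiteGraph α β ≤ G)
include hG

lemma connected_induce_disjSum {t : Finset α} {u : Finset β} (ht : t.Nonempty)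
    (hu : u.Nonempty) : (G.induce (t.disjSum u : Set (α ⊕ β))).Connected := by
  obtain ⟨a, ha⟩ := ht
  obtain ⟨b, hb⟩ := hu
  have hadj (a' : α) (b' : β) : G.Adj (.inl a') (.inr b') := hG (by simp)
  have hreach (x y : (t.disjSum u : Set (α ⊕ β))) (h : G.Adj x y) : (G.induce _).Reachable x y :=
    Adj.reachable h
  have hb' : Sum.inr b ∈ (t.disjSum u : Set (α ⊕ β)) := by simpa using hb
  have ha' : Sum.inl a ∈ (t.disjSum u : Set (α ⊕ β)) := by simpa using ha
  rw [connected_iff_exists_forall_reachable]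
  refine ⟨⟨_, hb'⟩, ?_⟩
  rintro ⟨a' | b', hv⟩
  · exact (hreach ⟨_, hv⟩ ⟨_, hb'⟩ (hadj a' b)).symm
  · exact (hreach ⟨_, hb'⟩ ⟨_, ha'⟩ (hadj a b).symm).trans (hreach ⟨_, ha'⟩ ⟨_, hv⟩ (hadj a b'))

lemma connected_induce_disjSum_iff (t : Finset α) (u : Finset β) :
    (G.induce (t.disjSum u : Set (α ⊕ β))).Connected ↔
      (t.Nonempty ∧ u.Nonempty) ∨ (((G.comap Sum.inl).induce (t : Set α)).Connected ∧ u = ∅) ∨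
        (t = ∅ ∧ ((G.comap Sum.inr).induce (u : Set β)).Connected) := by
  rcases u.eq_empty_or_nonempty with rfl | hu
  · rw [disjSum_empty, connected_induce_map_iff]
    change ((G.comap Sum.inl).induce (t : Set α)).Connected ↔ _
    simp only [Finset.not_nonempty_empty, and_false, and_true, false_or]
    exact (or_iff_left fun h : _ ∧ _ => not_connected_induce_empty _ h.2).symm
  rcases t.eq_empty_or_nonempty with rfl | ht
  · rw [empty_disjSum, connected_induce_map_iff]
    change ((G.comap Sum.inr).induce (u : Set β)).Connected ↔ _
    simp [hu.ne_empty]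
  · simp [connected_induce_disjSum hG ht hu, ht, hu]

theorem numConnSets_eq_of_completeBipartiteGraph_le [Fintype α] [Fintype β] :
    numConnSets G = (2 ^ Fintype.card α - 1) * (2 ^ Fintype.card β - 1) +
      numConnSets (G.comap Sum.inl) + numConnSets (G.comap Sum.inr) := by
  classical
  have hpairs : numConnSets G =
      #{p : Finset α × Finset β | (G.induce (p.1.disjSum p.2 : Set (α ⊕ β))).Connected} := by
    rw [numConnSets_eq_card_filter]
    exact (card_equiv sumEquiv.symm.toEquiv (by simp)).symm
  have hsplit : ({p | (G.induce (p.1.disjSum p.2 : Set (α ⊕ β))).Connected} :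
        Finset (Finset α × Finset β)) =
      ((univ.filter (·.Nonempty)) ×ˢ (univ.filter (·.Nonempty)) ∪
        (univ.filter fun t : Finset α => ((G.comap Sum.inl).induce (t : Set α)).Connected) ×ˢ
          {∅}) ∪
        {∅} ×ˢ
          (univ.filter fun u : Finset β => ((G.comap Sum.inr).induce (u : Set β)).Connected) := by
    ext ⟨t, u⟩
    simp only [mem_union, mem_product, mem_filter, mem_univ, true_and, mem_singleton, or_assoc]
    exact connected_induce_disjSum_iff hG t u
  rw [hpairs, hsplit, card_union_of_disjoint, card_union_of_disjoint]
  · simp only [card_product, card_filter_nonempty_univ, card_singleton, mul_one, one_mul,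
      numConnSets_eq_card_filter]
  all_goals
    simp only [Finset.disjoint_left, mem_union, mem_product, mem_filter, mem_univ, true_and,
      mem_singleton]
  · rintro ⟨t, u⟩ ⟨-, hu⟩ ⟨-, rfl⟩
    exact Finset.not_nonempty_empty hu
  · rintro ⟨t, u⟩ (⟨ht, -⟩ | ⟨ht, -⟩) ⟨rfl, -⟩
    · exact Finset.not_nonempty_empty ht
    · exact not_connected_induce_empty _ ht

end CompleteBipartite

end SimpleGraph

namespace KddMinusOnePlusMatching

variable {d : ℕ}

lemma completeBipartiteGraph_le :
    completeBipartiteGraph (Fin d) (Fin (d - 1)) ≤ KddMinusOnePlusMatching d :=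
  le_sup_left

lemma comap_inl_adj {a b : Fin d} :
    ((KddMinusOnePlusMatching d).comap Sum.inl).Adj a b ↔
      a ≠ b ∧ (a : ℕ) / 2 = (b : ℕ) / 2 := by
  simp [KddMinusOnePlusMatching, fromRel_adj]
  omega

lemma comap_inr : (KddMinusOnePlusMatching d).comap Sum.inr = ⊥ := by
  ext
  simp [KddMinusOnePlusMatching]

lemma subsingleton_neighborSet_comap_inl (a : Fin d) :
    (((KddMinusOnePlusMatching d).comap Sum.inl).neighborSet a).Subsingleton := by
  intro b hb c hc
  simp only [mem_neighborSet, comap_inl_adj] at hb hc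
  omega

lemma isRegularOfDegree_one_comap_inl
    [DecidableRel ((KddMinusOnePlusMatching d).comap Sum.inl).Adj] (hd : Even d) :
    ((KddMinusOnePlusMatching d).comap Sum.inl).IsRegularOfDegree 1 := by
  intro a
  rw [degree_eq_one_iff_existsUnique_adj]
  obtain ⟨k, rfl⟩ := hd
  -- the partner of `a` flips its last binary digit
  refine ⟨⟨2 * (a / 2) + (1 - a % 2), by omega⟩, ?_, fun b hb => ?_⟩
  · simp only [comap_inl_adj, Fin.ne_iff_vne]
    omega
  · simp only [comap_inl_adj, Fin.ne_iff_vne] at hb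
    ext
    dsimp only
    omega

lemma numConnSets_comap_inl (hd : Even d) :
    numConnSets ((KddMinusOnePlusMatching d).comap Sum.inl) = d + d / 2 := by
  classical
  have hedges := (isRegularOfDegree_one_comap_inl hd).two_mul_card_edgeFinset
  rw [Fintype.card_fin, one_mul] at hedges
  rw [numConnSets_eq_of_subsingleton_neighborSet subsingleton_neighborSet_comap_inl,
    Fintype.card_fin]
  omega

end KddMinusOnePlusMatching

theorem stmt12 (d : ℕ) (hd : 2 ≤ d) (hdeven : Even d) :
    numConnSets (KddMinusOnePlusMatching d) =
      (2 ^ d - 1) * (2 ^ (d - 1) - 1) + 5 * d / 2 - 1 := by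
  rw [numConnSets_eq_of_completeBipartiteGraph_le KddMinusOnePlusMatching.completeBipartiteGraph_le,
    KddMinusOnePlusMatching.numConnSets_comap_inl hdeven, KddMinusOnePlusMatching.comap_inr,
    numConnSets_bot, Fintype.card_fin, Fintype.card_fin]
  obtain ⟨k, rfl⟩ := hdeven
  omega
end

section
/- If d + 1 divides n, then for every d-regular graph G on n vertices, the number of dominating sets of G is at most (2^{d+1} − 1)^{n/(d+1)}, with equality for the disjoint union of n/(d+1) copies of K_{d+1}. -/
/-!
Shearer's lemma in its counting form: if every point lies in at least `k` of the sets `A i`, then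
a family `𝒜` of finite sets satisfies `|𝒜| ^ k ≤ ∏ i, |{S ∩ A i | S ∈ 𝒜}|`. It follows by induction,
splitting `𝒜` according to whether its members contain a point `a`. On `k` of the sets `A i`
containing `a`, the traces of the two halves are the two halves of the trace of `𝒜`, so their sizes
add up; on the other sets each is at most the trace of `𝒜`. The superadditivity of the geometric
mean, a consequence of AM-GM, then recombines the two induction hypotheses.

The closed neighbourhoods `N[v]` of a `d`-regular graph cover every vertex `d + 1` times, and the
trace of a dominating set on `N[v]` is one of the `2 ^ (d + 1) - 1` nonempty subsets of `N[v]`, so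
the number `D` of dominating sets satisfies `D ^ (d + 1) ≤ (2 ^ (d + 1) - 1) ^ n`. In a disjoint
union of cliques a set dominates iff it meets every clique, which gives equality.
-/

open SimpleGraph

/-- The number of dominating vertex subsets of `G`. -/
noncomputable def numDomSets {V : Type*} (G : SimpleGraph V) : ℕ :=
  Nat.card {s : Finset V // ∀ v, v ∈ s ∨ ∃ u ∈ s, G.Adj u v}

open Finset NNReal

namespace NNReal

variable {ι : Type*}

theorem prod_rpow_inv_card_add_le {s : Finset ι} (hs : s.Nonempty) (a b : ι → ℝ≥0) :
    (∏ i ∈ s, a i) ^ (#s : ℝ)⁻¹ + (∏ i ∈ s, b i) ^ (#s : ℝ)⁻¹ ≤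
      (∏ i ∈ s, (a i + b i)) ^ (#s : ℝ)⁻¹ := by
  set r : ℝ := (#s : ℝ)⁻¹
  have hr : 0 < r := by have := hs.card_pos; positivity
  by_cases hzero : ∃ i ∈ s, a i + b i = 0
  · obtain ⟨i, hi, h⟩ := hzero
    rw [prod_eq_zero hi (add_eq_zero.1 h).1, prod_eq_zero hi (add_eq_zero.1 h).2,
      zero_rpow hr.ne', add_zero]
    exact zero_le
  push Not at hzero
  set P := ∏ i ∈ s, (a i + b i)
  have hw : ∑ _i ∈ s, (#s : ℝ≥0)⁻¹ = 1 := by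
    rw [sum_const, nsmul_eq_mul, mul_inv_cancel₀ (by exact_mod_cast hs.card_pos.ne')]
  have amgm (f : ι → ℝ≥0) :
      (∏ i ∈ s, f i) ^ r ≤ P ^ r * ∑ i ∈ s, (#s : ℝ≥0)⁻¹ * (f i / (a i + b i)) := by
    have h := geom_mean_le_arith_mean_weighted s _ (fun i => f i / (a i + b i)) hw
    rw [finsetProd_rpow s _ (((#s : ℝ≥0)⁻¹ : ℝ≥0) : ℝ), prod_div_distrib, div_rpow,
      div_le_iff₀ (rpow_pos (prod_pos fun i hi => pos_iff_ne_zero.2 (hzero i hi))),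
      mul_comm] at h
    simpa using h
  calc (∏ i ∈ s, a i) ^ r + (∏ i ∈ s, b i) ^ r
      ≤ P ^ r * ∑ i ∈ s, (#s : ℝ≥0)⁻¹ * ((a i + b i) / (a i + b i)) := by
        simp_rw [add_div, mul_add, sum_add_distrib, mul_add]
        exact add_le_add (amgm a) (amgm b)
    _ = P ^ r := by
        rw [sum_congr rfl fun i hi => by rw [div_self (hzero i hi), mul_one], hw, mul_one]

theorem add_pow_card_le_mul_prod_add {s : Finset ι} {a b : ι → ℝ≥0} {M x y : ℝ≥0}
    (hx : x ^ #s ≤ M * ∏ i ∈ s, a i) (hy : y ^ #s ≤ M * ∏ i ∈ s, b i) :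
    (x + y) ^ #s ≤ M * ∏ i ∈ s, (a i + b i) := by
  rcases s.eq_empty_or_nonempty with rfl | hs
  · simpa using hx
  set r : ℝ := (#s : ℝ)⁻¹
  have hk : (#s : ℝ) ≠ 0 := by exact_mod_cast hs.card_pos.ne'
  have root {z w : ℝ≥0} (h : z ^ #s ≤ w) : z ≤ w ^ r := by
    rwa [← rpow_natCast, ← le_rpow_inv_iff (by positivity)] at h
  calc (x + y) ^ #s ≤ (M ^ r * (∏ i ∈ s, (a i + b i)) ^ r) ^ #s := by
        gcongr
        calc x + y ≤ M ^ r * (∏ i ∈ s, a i) ^ r + M ^ r * (∏ i ∈ s, b i) ^ r := by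
              rw [← mul_rpow, ← mul_rpow]; exact add_le_add (root hx) (root hy)
          _ ≤ M ^ r * (∏ i ∈ s, (a i + b i)) ^ r := by
              rw [← mul_add]; gcongr; exact prod_rpow_inv_card_add_le hs a b
    _ = M * ∏ i ∈ s, (a i + b i) := by
        rw [← mul_rpow, ← rpow_natCast, ← rpow_mul, inv_mul_cancel₀ hk, rpow_one]

theorem add_pow_card_le_prod [DecidableEq ι] {I J : Finset ι} (hJI : J ⊆ I) {b c t : ι → ℝ≥0}
    {x y : ℝ≥0}
    (hx : x ^ #J ≤ ∏ i ∈ I, b i) (hy : y ^ #J ≤ ∏ i ∈ I, c i)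
    (hb : ∀ i ∈ I \ J, b i ≤ t i) (hc : ∀ i ∈ I \ J, c i ≤ t i)
    (hbc : ∀ i ∈ J, b i + c i ≤ t i) :
    (x + y) ^ #J ≤ ∏ i ∈ I, t i := by
  have split (f : ι → ℝ≥0) : ∏ i ∈ I, f i = (∏ i ∈ I \ J, f i) * ∏ i ∈ J, f i :=
    (prod_sdiff hJI).symm
  rw [split] at hx hy ⊢
  calc (x + y) ^ #J ≤ (∏ i ∈ I \ J, t i) * ∏ i ∈ J, (b i + c i) := by
        refine add_pow_card_le_mul_prod_add (hx.trans ?_) (hy.trans ?_)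
        · gcongr with i hi; exact hb i hi
        · gcongr with i hi; exact hc i hi
    _ ≤ (∏ i ∈ I \ J, t i) * ∏ i ∈ J, t i := by gcongr with i hi; exact hbc i hi

end NNReal

namespace Finset

variable {α ι : Type*} [DecidableEq α] {𝒜 : Finset (Finset α)} {A : Finset α} {a : α}

lemma image_inter_nonMemberSubfamily_subset :
    (𝒜.nonMemberSubfamily a).image (· ∩ A) ⊆ 𝒜.image (· ∩ A) :=
  image_subset_image (filter_subset _ _)

lemma image_inter_nonMemberSubfamily (ha : a ∈ A) :
    (𝒜.nonMemberSubfamily a).image (· ∩ A) = (𝒜.image (· ∩ A)).nonMemberSubfamily a := by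
  ext t
  simp only [mem_image, mem_nonMemberSubfamily]
  constructor
  · rintro ⟨s, ⟨hs, has⟩, rfl⟩
    exact ⟨⟨s, hs, rfl⟩, fun h => has (mem_of_mem_inter_left h)⟩
  · rintro ⟨⟨s, hs, rfl⟩, has⟩
    exact ⟨s, ⟨hs, fun h => has (mem_inter_of_mem h ha)⟩, rfl⟩

lemma image_inter_memberSubfamily (ha : a ∈ A) :
    (𝒜.memberSubfamily a).image (· ∩ A) = (𝒜.image (· ∩ A)).memberSubfamily a := by
  ext t
  simp only [mem_image, mem_memberSubfamily]
  constructor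
  · rintro ⟨s, ⟨hs, has⟩, rfl⟩
    exact ⟨⟨insert a s, hs, insert_inter_of_mem ha⟩, fun h => has (mem_of_mem_inter_left h)⟩
  · rintro ⟨⟨s, hs, hsA⟩, hat⟩
    have has : a ∈ s := mem_of_mem_inter_left (hsA ▸ mem_insert_self a t)
    refine ⟨s.erase a, ⟨by rwa [insert_erase has], notMem_erase a s⟩, ?_⟩
    rw [erase_inter, hsA, erase_insert hat]

lemma card_image_inter_memberSubfamily_add_card_image_inter_nonMemberSubfamily (ha : a ∈ A) :
    #((𝒜.memberSubfamily a).image (· ∩ A)) + #((𝒜.nonMemberSubfamily a).image (· ∩ A)) =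
      #(𝒜.image (· ∩ A)) := by
  rw [image_inter_memberSubfamily ha, image_inter_nonMemberSubfamily ha,
    card_memberSubfamily_add_card_nonMemberSubfamily]

lemma card_image_inter_memberSubfamily_le :
    #((𝒜.memberSubfamily a).image (· ∩ A)) ≤ #(𝒜.image (· ∩ A)) := by
  by_cases ha : a ∈ A
  · exact (card_image_inter_memberSubfamily_add_card_image_inter_nonMemberSubfamily ha).le.trans'
      (Nat.le_add_right _ _)
  · refine card_le_card ?_
    simp only [subset_iff, mem_image, mem_memberSubfamily]
    rintro _ ⟨s, ⟨hs, -⟩, rfl⟩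
    exact ⟨insert a s, hs, by rw [insert_inter_of_notMem ha]⟩

theorem card_pow_le_prod_card_image_inter {k : ℕ} (hk : k ≠ 0) {I : Finset ι}
    {A : ι → Finset α} (hcov : ∀ a, k ≤ #{i ∈ I | a ∈ A i}) (𝒜 : Finset (Finset α)) :
    #𝒜 ^ k ≤ ∏ i ∈ I, #(𝒜.image (· ∩ A i)) := by
  classical
  induction 𝒜 using memberFamily_induction_on with
  | empty => simp [zero_pow hk]
  | singleton_empty => simp
  | @subfamily a 𝒜 hB hC =>
    obtain ⟨J, hJa, rfl⟩ := exists_subset_card_eq (hcov a)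
    have hJI : J ⊆ I := hJa.trans (filter_subset _ _)
    rw [← card_memberSubfamily_add_card_nonMemberSubfamily a 𝒜]
    have key := NNReal.add_pow_card_le_prod hJI
      (b := fun i => (#((𝒜.memberSubfamily a).image (· ∩ A i)) : ℝ≥0))
      (c := fun i => (#((𝒜.nonMemberSubfamily a).image (· ∩ A i)) : ℝ≥0))
      (t := fun i => (#(𝒜.image (· ∩ A i)) : ℝ≥0))
      (x := #(𝒜.memberSubfamily a)) (y := #(𝒜.nonMemberSubfamily a))
      (by exact_mod_cast hC) (by exact_mod_cast hB)
      (fun i _ => by exact_mod_cast card_image_inter_memberSubfamily_le)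
      (fun i _ => by exact_mod_cast card_le_card image_inter_nonMemberSubfamily_subset)
      (fun i hi => by
        exact_mod_cast (card_image_inter_memberSubfamily_add_card_image_inter_nonMemberSubfamily
          (mem_filter.1 (hJa hi)).2).le)
    exact_mod_cast key

end Finset

namespace SimpleGraph

variable {V : Type*} (G : SimpleGraph V)

def IsDominating (s : Finset V) : Prop := ∀ v, v ∈ s ∨ ∃ u ∈ s, G.Adj u v

lemma numDomSets_eq_natCard : numDomSets G = Nat.card {s // G.IsDominating s} := rfl

section Fintype

variable [Fintype V] [DecidableEq V] [DecidableRel G.Adj]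

instance : DecidablePred G.IsDominating := fun _ => inferInstanceAs (Decidable (∀ _, _))

def dominatingSets : Finset (Finset V) := {s | G.IsDominating s}

lemma numDomSets_eq_card_dominatingSets : numDomSets G = #G.dominatingSets := by
  rw [numDomSets_eq_natCard, Nat.card_eq_fintype_card, Fintype.card_subtype, dominatingSets]

def closedNeighborFinset (v : V) : Finset V := insert v (G.neighborFinset v)

lemma mem_closedNeighborFinset {u v : V} :
    u ∈ G.closedNeighborFinset v ↔ u = v ∨ G.Adj v u := by
  simp [closedNeighborFinset]

lemma card_closedNeighborFinset (v : V) : #(G.closedNeighborFinset v) = G.degree v + 1 := by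
  rw [closedNeighborFinset, card_insert_of_notMem (by simp), card_neighborFinset_eq_degree]

lemma filter_mem_closedNeighborFinset (u : V) :
    ({v | u ∈ G.closedNeighborFinset v} : Finset V) = G.closedNeighborFinset u := by
  ext v
  simp only [mem_filter, mem_univ, true_and, mem_closedNeighborFinset, eq_comm, G.adj_comm]

variable {G} in
lemma IsDominating.inter_closedNeighborFinset_nonempty {s : Finset V} (hs : G.IsDominating s)
    (v : V) : (s ∩ G.closedNeighborFinset v).Nonempty := by
  rcases hs v with hv | ⟨u, hu, huv⟩
  · exact ⟨v, mem_inter.2 ⟨hv, G.mem_closedNeighborFinset.2 (.inl rfl)⟩⟩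
  · exact ⟨u, mem_inter.2 ⟨hu, G.mem_closedNeighborFinset.2 (.inr huv.symm)⟩⟩

lemma card_image_inter_closedNeighborFinset_le (v : V) :
    #(G.dominatingSets.image (· ∩ G.closedNeighborFinset v)) ≤ 2 ^ (G.degree v + 1) - 1 := by
  calc _ ≤ #(Ioc ∅ (G.closedNeighborFinset v)) := by
        refine card_le_card fun t ht => ?_
        obtain ⟨s, hs, rfl⟩ := mem_image.1 ht
        have hs : G.IsDominating s := (mem_filter.1 hs).2
        exact mem_Ioc.2 ⟨(hs.inter_closedNeighborFinset_nonempty v).empty_ssubset,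
          inter_subset_right⟩
    _ = 2 ^ (G.degree v + 1) - 1 := by
        rw [card_Ioc_finset (empty_subset _), card_empty, Nat.sub_zero, card_closedNeighborFinset]

end Fintype

theorem numDomSets_pow_le_prod [Fintype V] [DecidableRel G.Adj] {k : ℕ}
    (hk : ∀ v, k ≤ G.degree v) :
    numDomSets G ^ (k + 1) ≤ ∏ v, (2 ^ (G.degree v + 1) - 1) := by
  classical
  have hcov (u : V) : k + 1 ≤ #{v | u ∈ G.closedNeighborFinset v} := by
    rw [filter_mem_closedNeighborFinset, card_closedNeighborFinset]
    exact Nat.succ_le_succ (hk u)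
  rw [numDomSets_eq_card_dominatingSets]
  calc #G.dominatingSets ^ (k + 1)
      ≤ ∏ v, #(G.dominatingSets.image (· ∩ G.closedNeighborFinset v)) :=
        card_pow_le_prod_card_image_inter k.succ_ne_zero hcov _
    _ ≤ ∏ v, (2 ^ (G.degree v + 1) - 1) :=
        prod_le_prod' fun v _ => G.card_image_inter_closedNeighborFinset_le v

theorem IsRegularOfDegree.numDomSets_pow_le [Fintype V] [DecidableRel G.Adj] {d : ℕ}
    (h : G.IsRegularOfDegree d) :
    numDomSets G ^ (d + 1) ≤ (2 ^ (d + 1) - 1) ^ Fintype.card V := by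
  simpa [h _] using G.numDomSets_pow_le_prod fun v => (h v).ge

end SimpleGraph

section DisjointCliques

variable {α β : Type*} [Fintype α] [Fintype β]

variable (α β) in
def Finset.curryEquiv [DecidableEq α] [DecidableEq β] : Finset (α × β) ≃ (α → Finset β) where
  toFun s a := {b | (a, b) ∈ s}
  invFun f := {p | p.2 ∈ f p.1}
  left_inv s := by ext; simp
  right_inv f := by ext; simp

lemma isDominating_fromRel_fst_iff [DecidableEq α] [DecidableEq β] [Nonempty β]
    {s : Finset (α × β)} :
    (fromRel fun p q : α × β => p.1 = q.1).IsDominating s ↔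
      ∀ a, (Finset.curryEquiv α β s a).Nonempty := by
  simp only [IsDominating, Finset.curryEquiv, Equiv.coe_fn_mk, fromRel_adj, filter_nonempty_iff,
    mem_univ, true_and]
  constructor
  · intro h a
    obtain ⟨b⟩ := ‹Nonempty β›
    rcases h (a, b) with hab | ⟨⟨a', c⟩, hc, -, ha'⟩
    · exact ⟨b, hab⟩
    · obtain rfl : a' = a := ha'.elim id Eq.symm
      exact ⟨c, hc⟩
  · rintro h ⟨a, b⟩
    obtain ⟨c, hc⟩ := h a
    by_cases hcb : c = b
    · exact .inl (hcb ▸ hc)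
    · exact .inr ⟨(a, c), hc, by simp [hcb]⟩

theorem numDomSets_fromRel_fst [Nonempty β] :
    numDomSets (fromRel fun p q : α × β => p.1 = q.1) =
      (2 ^ Fintype.card β - 1) ^ Fintype.card α := by
  classical
  have hnonempty : ({t | t.Nonempty} : Finset (Finset β)) = univ.erase ∅ := by
    ext; simp [nonempty_iff_ne_empty]
  rw [numDomSets_eq_natCard, Nat.card_congr ((Equiv.subtypeEquiv (Finset.curryEquiv α β)
    fun _ => isDominating_fromRel_fst_iff).trans Equiv.subtypePiEquivPi), Nat.card_pi]
  simp only [Nat.card_eq_fintype_card, Fintype.card_subtype, prod_const, card_univ, hnonempty]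
  rw [card_erase_of_mem (mem_univ _), card_univ, Fintype.card_finset]

end DisjointCliques

theorem stmt15 (d n : ℕ) (hdvd : (d + 1) ∣ n) :
    (∀ (V : Type) [Fintype V] (G : SimpleGraph V) [DecidableRel G.Adj],
      Fintype.card V = n → G.IsRegularOfDegree d →
      numDomSets G ≤ (2 ^ (d + 1) - 1) ^ (n / (d + 1))) ∧
    numDomSets (fromRel (fun a b : Fin (n / (d + 1)) × Fin (d + 1) => a.1 = b.1)) =
      (2 ^ (d + 1) - 1) ^ (n / (d + 1)) := by
  obtain ⟨m, rfl⟩ := hdvd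
  rw [Nat.mul_div_cancel_left m d.succ_pos]
  refine ⟨fun V _ G _ hcard hreg => ?_, ?_⟩
  · rw [← Nat.pow_le_pow_iff_left d.succ_ne_zero, ← pow_mul, mul_comm, ← hcard]
    exact hreg.numDomSets_pow_le
  · simpa using numDomSets_fromRel_fst (α := Fin m) (β := Fin (d + 1))
end
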